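/- Suppose (φ_{t_n}) is a sequence of univalent maps on the exterior disk with φ_{t_n} → id uniformly on compacts, and (φ_{t_n} − id)/t_n → χ uniformly on compact subsets of {|z| > 1}, where t_n ↓ 0. Then on any compact K ⊂ {|z| > 1} eventually contained in the domains of ψ_{t_n} = φ_{t_n}^{−1}, one has (ψ_{t_n} − id)/t_n → −χ uniformly on K. -/

import Mathlib

open Complex Filter Set Metric Uniformity

/-! If `φ` moves every point of the closed disk `B(z, ρ)` by less than `ρ/2` but misses `z`, then
`(φ - z)⁻¹` is holomorphic on the disk, smaller than `2/ρ` on its boundary circle and larger than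
`2/ρ` at its centre, against the maximum modulus principle. Hence, once `φₙ` is uniformly close to
the identity near `K`, every `z ∈ K` has a `φₙ`-preimage near `z`, which by injectivity is `ψₙ z`:
so `ψₙ → id` uniformly on `K`. Finally `(ψₙ z - z)/tₙ = -(φₙ w - w)/tₙ` at `w = ψₙ z`, and this
tends to `-χ z` uniformly because `(φₙ - id)/tₙ → χ` uniformly near `K` and `χ` is uniformly
continuous there. -/

theorem mem_image_closedBall_of_dist_lt_half {f : ℂ → ℂ} {z : ℂ} {ρ : ℝ} (hρ : 0 < ρ)
    (hf : DifferentiableOn ℂ f (closedBall z ρ))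
    (hclose : ∀ w ∈ closedBall z ρ, dist w (f w) < ρ / 2) :
    z ∈ f '' closedBall z ρ := by
  by_contra hz
  have hne : ∀ w ∈ closedBall z ρ, f w - z ≠ 0 := fun w hw h =>
    hz ⟨w, hw, sub_eq_zero.mp h⟩
  have hd : DiffContOnCl ℂ (fun w => (f w - z)⁻¹) (ball z ρ) :=
    ((hf.sub_const z).inv hne).diffContOnCl_ball subset_rfl
  have hsphere : ∀ w ∈ frontier (ball z ρ), ‖(f w - z)⁻¹‖ ≤ (ρ / 2)⁻¹ := by
    intro w hw
    rw [frontier_ball z hρ.ne'] at hw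
    have hfw := hclose w (sphere_subset_closedBall hw)
    have hwz : dist w z = ρ := mem_sphere.mp hw
    have : ρ / 2 ≤ ‖f w - z‖ := by
      rw [← dist_eq]
      linarith [dist_triangle w (f w) z]
    rw [norm_inv]
    exact inv_anti₀ (by positivity) this
  have hcentre := Complex.norm_le_of_forall_mem_frontier_norm_le isBounded_ball hd hsphere
    (subset_closure (mem_ball_self hρ))
  have hfz := hclose z (mem_closedBall_self hρ.le)
  rw [norm_inv, inv_le_inv₀ (norm_pos_iff.mpr (hne z (mem_closedBall_self hρ.le)))
    (by positivity), ← dist_eq, dist_comm] at hcentre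
  linarith

theorem tendstoUniformlyOn_id_of_rightInverse {ι : Type*} {l : Filter ι} {φ ψ : ι → ℂ → ℂ}
    {U K : Set ℂ} (hU : IsOpen U) (hKU : K ⊆ U) (hK : IsCompact K)
    (hφ : ∀ i, DifferentiableOn ℂ (φ i) U ∧ InjOn (φ i) U)
    (hφid : ∀ L ⊆ U, IsCompact L → TendstoUniformlyOn φ id l L)
    (hψ : ∀ᶠ i in l, ∀ z ∈ K, ψ i z ∈ U ∧ φ i (ψ i z) = z) :
    TendstoUniformlyOn ψ id l K := by
  obtain ⟨r, hr, hrU⟩ := hK.exists_cthickening_subset_open hU hKU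
  rw [Metric.tendstoUniformlyOn_iff]
  intro ε hε
  set ρ := min (ε / 2) r
  have hρ : 0 < ρ := lt_min (half_pos hε) hr
  have hnear := Metric.tendstoUniformlyOn_iff.mp (hφid _ hrU hK.cthickening) (ρ / 2)
    (half_pos hρ)
  filter_upwards [hnear, hψ] with i hi hψi z hz
  have hball : closedBall z ρ ⊆ cthickening r K := fun w hw =>
    mem_cthickening_of_dist_le w z r K hz ((mem_closedBall.mp hw).trans (min_le_right _ _))
  obtain ⟨w, hw, hφw⟩ := mem_image_closedBall_of_dist_lt_half hρ
    ((hφ i).1.mono (hball.trans hrU)) fun w hw => hi w (hball hw)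
  have hwψ : w = ψ i z := (hφ i).2 (hrU (hball hw)) (hψi z hz).1 (by rw [hφw, (hψi z hz).2])
  calc dist z (ψ i z) ≤ ρ := by rw [← hwψ, dist_comm]; exact hw
    _ ≤ ε / 2 := min_le_left _ _
    _ < ε := half_lt_self hε

theorem TendstoUniformlyOn.comp_of_tendstoUniformlyOn_id {ι α β : Type*} [UniformSpace α]
    [UniformSpace β] {l : Filter ι} {F : ι → α → β} {f : α → β} {p : ι → α → α} {K L : Set α}
    (hF : TendstoUniformlyOn F f l L) (hf : UniformContinuousOn f L)
    (hp : TendstoUniformlyOn p id l K) (hpL : ∀ᶠ i in l, ∀ z ∈ K, p i z ∈ L) (hKL : K ⊆ L) :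
    TendstoUniformlyOn (fun i z => F i (p i z)) f l K := by
  rw [tendstoUniformlyOn_iff_tendsto] at hF hp ⊢
  have hmem : ∀ᶠ q in l ×ˢ 𝓟 K, p q.1 q.2 ∈ L ∧ q.2 ∈ L := by
    filter_upwards [prod_mem_prod hpL (mem_principal_self K)] with q hq
    exact ⟨hq.1 q.2 hq.2, hKL hq.2⟩
  have hmove : Tendsto (fun q : ι × α => (f q.2, f (p q.1 q.2))) (l ×ˢ 𝓟 K) (𝓤 β) :=
    Tendsto.comp hf <|
      tendsto_inf.2 ⟨hp, tendsto_principal.2 (hmem.mono fun _ hq => mk_mem_prod hq.2 hq.1)⟩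
  have happrox : Tendsto (fun q : ι × α => (f (p q.1 q.2), F q.1 (p q.1 q.2))) (l ×ˢ 𝓟 K)
      (𝓤 β) :=
    hF.comp (tendsto_fst.prodMk (tendsto_principal.2 (hmem.mono fun _ hq => hq.1)))
  exact hmove.uniformity_trans happrox

theorem TendstoUniformlyOn.eventually_mem_cthickening {ι α : Type*} [PseudoMetricSpace α]
    {l : Filter ι} {p : ι → α → α} {K : Set α} {r : ℝ} (hp : TendstoUniformlyOn p id l K)
    (hr : 0 < r) : ∀ᶠ i in l, ∀ z ∈ K, p i z ∈ cthickening r K := by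
  filter_upwards [Metric.tendstoUniformlyOn_iff.mp hp r hr] with i hi z hz
  exact mem_cthickening_of_dist_le _ z r K hz (by rw [dist_comm]; exact (hi z hz).le)

theorem inverse_expansion_limit_general (t : ℕ → ℝ)
    (φ ψ : ℕ → ℂ → ℂ) (χ : ℂ → ℂ)
    (hχhol : DifferentiableOn ℂ χ {z : ℂ | 1 < ‖z‖})
    (hφ : ∀ n, DifferentiableOn ℂ (φ n) {z : ℂ | 1 < ‖z‖} ∧
      Set.InjOn (φ n) {z : ℂ | 1 < ‖z‖})
    (hφid : ∀ K : Set ℂ, K ⊆ {z : ℂ | 1 < ‖z‖} → IsCompact K →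
      TendstoUniformlyOn (fun n => φ n) id atTop K)
    (hχconv : ∀ K : Set ℂ, K ⊆ {z : ℂ | 1 < ‖z‖} → IsCompact K →
      TendstoUniformlyOn (fun n z => (φ n z - z) / (t n : ℂ)) χ atTop K)
    (K : Set ℂ) (hK : K ⊆ {z : ℂ | 1 < ‖z‖}) (hKc : IsCompact K)
    (hψ : ∀ᶠ n in atTop, ∀ z ∈ K,
      ψ n z ∈ {z : ℂ | 1 < ‖z‖} ∧ φ n (ψ n z) = z) :
    TendstoUniformlyOn (fun n z => (ψ n z - z) / (t n : ℂ)) (fun z => -χ z) atTop K := by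
  have hU : IsOpen {z : ℂ | 1 < ‖z‖} := isOpen_lt continuous_const continuous_norm
  obtain ⟨r, hr, hKrU⟩ := hKc.exists_cthickening_subset_open hU hK
  have hKrc : IsCompact (cthickening r K) := hKc.cthickening
  have hψid : TendstoUniformlyOn ψ id atTop K :=
    tendstoUniformlyOn_id_of_rightInverse hU hK hKc hφ hφid hψ
  have hlim := (hχconv _ hKrU hKrc).comp_of_tendstoUniformlyOn_id
    (hKrc.uniformContinuousOn_of_continuous (hχhol.continuousOn.mono hKrU)) hψid
    (hψid.eventually_mem_cthickening hr) (self_subset_cthickening K)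
  refine hlim.neg.congr ?_
  filter_upwards [hψ] with n hn z hz
  simp only [Pi.neg_apply, (hn z hz).2, ← neg_div, neg_sub]

/-- If `φ_{t_n}` are univalent maps on the exterior disk with
`φ_{t_n} → id` uniformly on compacts and `(φ_{t_n} − id)/t_n → χ` uniformly on
compact subsets of `{|z| > 1}` (where `t_n ↓ 0`), then on any compact
`K ⊆ {|z| > 1}` eventually contained in the domains of the inverses
`ψ_{t_n} = φ_{t_n}⁻¹`, one has `(ψ_{t_n} − id)/t_n → −χ` uniformly on `K`. -/
theorem inverse_expansion_limit (t : ℕ → ℝ) (ht : ∀ n, 0 < t n)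
    (hanti : StrictAnti t) (hlim : Tendsto t atTop (nhds 0))
    (φ ψ : ℕ → ℂ → ℂ) (χ : ℂ → ℂ)
    (hχhol : DifferentiableOn ℂ χ {z : ℂ | 1 < ‖z‖})
    (hφ : ∀ n, DifferentiableOn ℂ (φ n) {z : ℂ | 1 < ‖z‖} ∧
      Set.InjOn (φ n) {z : ℂ | 1 < ‖z‖})
    (hφid : ∀ K : Set ℂ, K ⊆ {z : ℂ | 1 < ‖z‖} → IsCompact K →
      TendstoUniformlyOn (fun n => φ n) id atTop K)
    (hχconv : ∀ K : Set ℂ, K ⊆ {z : ℂ | 1 < ‖z‖} → IsCompact K →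
      TendstoUniformlyOn (fun n z => (φ n z - z) / (t n : ℂ)) χ atTop K)
    (K : Set ℂ) (hK : K ⊆ {z : ℂ | 1 < ‖z‖}) (hKc : IsCompact K)
    (hψ : ∀ᶠ n in atTop, ∀ z ∈ K,
      ψ n z ∈ {z : ℂ | 1 < ‖z‖} ∧ φ n (ψ n z) = z) :
    TendstoUniformlyOn (fun n z => (ψ n z - z) / (t n : ℂ)) (fun z => -χ z) atTop K :=
  inverse_expansion_limit_general t φ ψ χ hχhol hφ hφid hχconv K hK hKc hψ
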